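/- Under the same setting (subshift of finite type X, A Lipschitz, non-positive, m(A)=0, Mañé potential S), if x, y ∈ X satisfy S(x,y) + S(y,x) = 0, then S(x,z) = S(y,z) for all z ∈ X. -/

import Mathlib

open Filter MeasureTheory Classical

/-- The left shift on one-sided sequences. -/
def shift {m : ℕ} (x : ℕ → Fin m) : ℕ → Fin m := fun n => x (n + 1)

/-- The metric `d(x,y) = θ^{min{i : x_i ≠ y_i}}` on sequence space. -/
noncomputable def shiftDist (θ : ℝ) {m : ℕ} (x y : ℕ → Fin m) : ℝ :=
  if x = y then 0 else θ ^ sInf {i : ℕ | x i ≠ y i}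

/-- The Birkhoff sum `S_n(A) = A + A∘σ + ... + A∘σ^{n-1}`. -/
noncomputable def birkhoff {m : ℕ} (A : (ℕ → Fin m) → ℝ) (n : ℕ) (x : ℕ → Fin m) : ℝ :=
  ∑ i ∈ Finset.range n, A (shift^[i] x)

/-- The Mañé potential
`S(x,y) = lim_{ε→0} sup {S_n(A)(z) : σⁿ(z) = y, d(x,z) < ε, n ≥ 1, z ∈ X}`,
with values in the extended reals. -/
noncomputable def manePotential {m : ℕ} (θ : ℝ) (X : Set (ℕ → Fin m))
    (A : (ℕ → Fin m) → ℝ) (x y : ℕ → Fin m) : EReal :=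
  ⨅ (ε : ℝ) (_ : 0 < ε),
    sSup {v : EReal | ∃ n : ℕ, 1 ≤ n ∧ ∃ z ∈ X,
      shift^[n] z = y ∧ shiftDist θ x z < ε ∧ v = (birkhoff A n z : EReal)}

/-- `X` is a subshift of finite type: the sequences avoiding a finite set of
forbidden words. -/
def IsSFT {m : ℕ} (X : Set (ℕ → Fin m)) : Prop :=
  ∃ F : Set (List (Fin m)), F.Finite ∧
    X = {x | ∀ (i l : ℕ), List.ofFn (fun j : Fin l => x (i + j)) ∉ F}

/-- `m(A) = 0`: the supremum of `∫ A dν` over shift-invariant probability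
measures giving full mass to `X` is zero. -/
def MaxIntegralZero {m : ℕ} (X : Set (ℕ → Fin m)) (A : (ℕ → Fin m) → ℝ) : Prop :=
  sSup {r : ℝ | ∃ ν : Measure (ℕ → Fin m), IsProbabilityMeasure ν ∧
    ν.map shift = ν ∧ ν X = 1 ∧ r = ∫ x, A x ∂ν} = 0

/-! Gluing an almost optimal orbit segment from `x` to `y` to one from `y` to `z` gives
`S(x,y) + S(y,z) ≤ S(x,z)`: in a subshift of finite type two points of `X` can be concatenated
once they agree on a block longer than every forbidden word, and the Lipschitz bound on `A`
makes the Birkhoff sum of the glued segment close to the sum of the two pieces, because the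
shifted points stay exponentially close. Since `S ≤ 0`, `S(x,y) + S(y,x) = 0` forces
`S(x,y) = S(y,x) = 0`, and subadditivity through `x` and through `y` gives the two inequalities
between `S(x,z)` and `S(y,z)`. -/

open Function Topology

lemma EReal.le_of_forall_pos_le_add {a b : EReal} (h : ∀ c : ℝ, 0 < c → a ≤ b + c) :
    a ≤ b := by
  refine EReal.le_of_forall_lt_iff_le.mp fun r hbr => ?_
  obtain ⟨q, hbq, hqr⟩ := EReal.lt_iff_exists_real_btwn.mp hbr
  calc a ≤ b + ((r - q : ℝ) : EReal) := h _ (by exact_mod_cast sub_pos.mpr hqr)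
    _ ≤ (q : EReal) + ((r - q : ℝ) : EReal) := by gcongr
    _ = r := by rw [← EReal.coe_add, add_sub_cancel]

lemma eq_zero_of_nonpos_of_add_eq_zero {α : Type*} [AddZeroClass α] [PartialOrder α]
    [AddLeftMono α] [AddRightMono α] {a b : α} (ha : a ≤ 0) (hb : b ≤ 0) (hab : a + b = 0) :
    a = 0 ∧ b = 0 :=
  (add_eq_zero_iff_of_nonneg (α := αᵒᵈ) ha hb).mp hab

section Shift

variable {m : ℕ}

lemma shift_iterate_apply (n : ℕ) (x : ℕ → Fin m) (i : ℕ) : shift^[n] x i = x (i + n) := by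
  induction n generalizing x with
  | zero => rfl
  | succ n ih =>
    rw [iterate_succ_apply, ih]
    exact congrArg x (by omega)

lemma iterate_shift_mem {X : Set (ℕ → Fin m)} (hXinv : ∀ x ∈ X, shift x ∈ X)
    {x : ℕ → Fin m} (hx : x ∈ X) (n : ℕ) : shift^[n] x ∈ X := by
  induction n with
  | zero => exact hx
  | succ n ih => rw [iterate_succ_apply']; exact hXinv _ ih

lemma shiftDist_nonneg {θ : ℝ} (hθ : 0 ≤ θ) (x y : ℕ → Fin m) : 0 ≤ shiftDist θ x y := by
  unfold shiftDist
  split_ifs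
  exacts [le_rfl, pow_nonneg hθ _]

lemma eq_of_shiftDist_lt_pow {θ : ℝ} (hθ0 : 0 < θ) (hθ1 : θ < 1) {x y : ℕ → Fin m} {N : ℕ}
    (h : shiftDist θ x y < θ ^ N) {i : ℕ} (hi : i ≤ N) : x i = y i := by
  unfold shiftDist at h
  split_ifs at h with hxy
  · rw [hxy]
  · by_contra hne
    have hlt : N < sInf {i : ℕ | x i ≠ y i} := (pow_lt_pow_iff_right_of_lt_one₀ hθ0 hθ1).mp h
    have hle : sInf {i : ℕ | x i ≠ y i} ≤ i := Nat.sInf_le hne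
    omega

lemma shiftDist_le_pow {θ : ℝ} (hθ0 : 0 ≤ θ) (hθ1 : θ ≤ 1) {x y : ℕ → Fin m} {N : ℕ}
    (h : ∀ i < N, x i = y i) : shiftDist θ x y ≤ θ ^ N := by
  unfold shiftDist
  split_ifs with hxy
  · exact pow_nonneg hθ0 N
  · refine pow_le_pow_of_le_one hθ0 hθ1 (le_csInf (Function.ne_iff.mp hxy) fun i hi => ?_)
    by_contra hiN
    exact hi (h i (by omega))

end Shift

section Birkhoff

variable {m : ℕ} {X : Set (ℕ → Fin m)} {A : (ℕ → Fin m) → ℝ}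

lemma birkhoff_eq_birkhoffSum : birkhoff A = birkhoffSum shift A := rfl

lemma birkhoff_nonpos (hXinv : ∀ x ∈ X, shift x ∈ X) (hAneg : ∀ x ∈ X, A x ≤ 0)
    {x : ℕ → Fin m} (hx : x ∈ X) (n : ℕ) : birkhoff A n x ≤ 0 :=
  Finset.sum_nonpos fun i _ => hAneg _ (iterate_shift_mem hXinv hx i)

lemma abs_birkhoff_sub_le {θ C : ℝ} (hθ0 : 0 ≤ θ) (hθ1 : θ < 1) (hC0 : 0 ≤ C)
    (hXinv : ∀ x ∈ X, shift x ∈ X) (hA : ∀ x ∈ X, ∀ y ∈ X, |A x - A y| ≤ C * shiftDist θ x y)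
    {u w : ℕ → Fin m} (hu : u ∈ X) (hw : w ∈ X) {k N : ℕ} (huw : ∀ i < k + N, u i = w i) :
    |birkhoff A k u - birkhoff A k w| ≤ C * (θ ^ N / (1 - θ)) := by
  have hterm : ∀ i ∈ Finset.range k,
      |A (shift^[i] u) - A (shift^[i] w)| ≤ C * (θ ^ N * θ ^ (k - 1 - i)) := by
    intro i hi
    have hik := Finset.mem_range.mp hi
    have hdist : shiftDist θ (shift^[i] u) (shift^[i] w) ≤ θ ^ (N + (k - 1 - i)) :=
      (shiftDist_le_pow (N := k + N - i) hθ0 hθ1.le fun j hj => by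
        rw [shift_iterate_apply, shift_iterate_apply]
        exact huw _ (by omega)).trans
        (pow_le_pow_of_le_one hθ0 hθ1.le (by omega))
    rw [← pow_add]
    exact (hA _ (iterate_shift_mem hXinv hu i) _ (iterate_shift_mem hXinv hw i)).trans
      (mul_le_mul_of_nonneg_left hdist hC0)
  have hgeom : ∑ i ∈ Finset.range k, θ ^ i ≤ 1 / (1 - θ) := by
    have h := geom_sum_Ico_le_of_lt_one (m := 0) (n := k) hθ0 hθ1
    rwa [← Finset.range_eq_Ico, pow_zero] at h
  calc |birkhoff A k u - birkhoff A k w|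
      ≤ ∑ i ∈ Finset.range k, |A (shift^[i] u) - A (shift^[i] w)| := by
        rw [birkhoff, birkhoff, ← Finset.sum_sub_distrib]
        exact Finset.abs_sum_le_sum_abs _ _
    _ ≤ ∑ i ∈ Finset.range k, C * (θ ^ N * θ ^ (k - 1 - i)) := Finset.sum_le_sum hterm
    _ = C * (θ ^ N * ∑ i ∈ Finset.range k, θ ^ i) := by
        rw [← Finset.sum_range_reflect (fun i => θ ^ i) k, Finset.mul_sum, Finset.mul_sum]
    _ ≤ C * (θ ^ N * (1 / (1 - θ))) := by gcongr
    _ = C * (θ ^ N / (1 - θ)) := by rw [mul_one_div]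

end Birkhoff

section Glue

variable {m : ℕ}

def glue (k : ℕ) (w z : ℕ → Fin m) : ℕ → Fin m := fun i => if i < k then w i else z (i - k)

lemma shift_iterate_glue (k : ℕ) (w z : ℕ → Fin m) : shift^[k] (glue k w z) = z := by
  funext i
  rw [shift_iterate_apply, glue, if_neg (by omega), Nat.add_sub_cancel]

lemma glue_apply_of_lt {k N : ℕ} {w z : ℕ → Fin m} (hwz : ∀ i < N, w (k + i) = z i) {i : ℕ}
    (hi : i < k + N) : glue k w z i = w i := by
  unfold glue
  split_ifs with hik
  · rfl
  · rw [← hwz (i - k) (by omega)]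
    exact congrArg w (by omega)

lemma IsSFT.exists_glue_mem {X : Set (ℕ → Fin m)} (hX : IsSFT X) :
    ∃ L : ℕ, ∀ (k : ℕ) (w z : ℕ → Fin m), w ∈ X → z ∈ X → (∀ i < L, w (k + i) = z i) →
      glue k w z ∈ X := by
  obtain ⟨F, hF, rfl⟩ := hX
  obtain ⟨L, hL⟩ := (hF.image List.length).bddAbove
  refine ⟨L, fun k w z hw hz hwz i l hmem => ?_⟩
  have hlL : l ≤ L := by simpa using hL ⟨_, hmem, rfl⟩
  -- A forbidden window is short, so it lies in the first `k + L` symbols, where the glued point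
  -- is `w`, or beyond position `k`, where it is `z` shifted.
  by_cases hil : i + l ≤ k + L
  · refine hw i l ?_
    convert hmem using 3 with j
    exact (glue_apply_of_lt hwz (by omega)).symm
  · refine hz (i - k) l ?_
    convert hmem using 3 with j
    rw [glue, if_neg (by omega)]
    exact congrArg z (by omega)

end Glue

section ManePotential

variable {m : ℕ} {θ : ℝ} {X : Set (ℕ → Fin m)} {A : (ℕ → Fin m) → ℝ}

noncomputable def maneApprox (θ : ℝ) (X : Set (ℕ → Fin m)) (A : (ℕ → Fin m) → ℝ)
    (x y : ℕ → Fin m) (ε : ℝ) : EReal :=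
  sSup {v : EReal | ∃ n : ℕ, 1 ≤ n ∧ ∃ z ∈ X,
    shift^[n] z = y ∧ shiftDist θ x z < ε ∧ v = (birkhoff A n z : EReal)}

lemma manePotential_le_maneApprox (x y : ℕ → Fin m) {ε : ℝ} (hε : 0 < ε) :
    manePotential θ X A x y ≤ maneApprox θ X A x y ε :=
  iInf₂_le ε hε

lemma le_maneApprox {x y z : ℕ → Fin m} (hz : z ∈ X) {n : ℕ} (hn : 1 ≤ n)
    (hzy : shift^[n] z = y) {ε : ℝ} (hxz : shiftDist θ x z < ε) :
    (birkhoff A n z : EReal) ≤ maneApprox θ X A x y ε :=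
  le_sSup ⟨n, hn, z, hz, hzy, hxz, rfl⟩

lemma manePotential_nonpos (hXinv : ∀ x ∈ X, shift x ∈ X) (hAneg : ∀ x ∈ X, A x ≤ 0)
    (x y : ℕ → Fin m) : manePotential θ X A x y ≤ 0 := by
  refine (manePotential_le_maneApprox x y one_pos).trans (sSup_le ?_)
  rintro _ ⟨n, -, z, hz, -, -, rfl⟩
  exact_mod_cast birkhoff_nonpos hXinv hAneg hz n

lemma maneApprox_add_le (hθ0 : 0 < θ) (hθ1 : θ < 1) (hXinv : ∀ x ∈ X, shift x ∈ X)
    {C : ℝ} (hC0 : 0 ≤ C) (hA : ∀ x ∈ X, ∀ y ∈ X, |A x - A y| ≤ C * shiftDist θ x y)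
    {L : ℕ} (hglue : ∀ (k : ℕ) (w z : ℕ → Fin m), w ∈ X → z ∈ X →
      (∀ i < L, w (k + i) = z i) → glue k w z ∈ X)
    {N : ℕ} (hLN : L ≤ N) {ε : ℝ} (hNε : θ ^ N < ε) (x y z : ℕ → Fin m) :
    maneApprox θ X A x y (θ ^ N) + maneApprox θ X A y z (θ ^ N) ≤
      maneApprox θ X A x z ε + (C * (θ ^ N / (1 - θ)) : ℝ) := by
  refine EReal.add_le_of_forall_lt fun a ha b hb => ?_
  obtain ⟨_, ⟨k, -, w, hw, hwy, hxw, rfl⟩, haw⟩ := lt_sSup_iff.mp ha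
  obtain ⟨_, ⟨n, hn, w', hw', hw'z, hyw', rfl⟩, hbw'⟩ := lt_sSup_iff.mp hb
  have hww' : ∀ i < N, w (k + i) = w' i := fun i hi => by
    rw [← eq_of_shiftDist_lt_pow hθ0 hθ1 hyw' hi.le, ← hwy, shift_iterate_apply, add_comm]
  set u := glue k w w'
  have hu : u ∈ X := hglue k w w' hw hw' fun i hi => hww' i (by omega)
  have huw : ∀ i < k + N, u i = w i := fun i hi => glue_apply_of_lt hww' hi
  have hxu : shiftDist θ x u < ε := by
    refine (shiftDist_le_pow hθ0.le hθ1.le fun i hi => ?_).trans_lt hNε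
    rw [eq_of_shiftDist_lt_pow hθ0 hθ1 hxw hi.le, huw i (by omega)]
  have hsplit : birkhoff A (k + n) u = birkhoff A k u + birkhoff A n w' := by
    rw [birkhoff_eq_birkhoffSum, birkhoffSum_add, shift_iterate_glue]
  have hdist := (abs_le.mp (abs_birkhoff_sub_le hθ0.le hθ1 hC0 hXinv hA hu hw huw)).1
  have hreach : shift^[k + n] u = z := by
    rw [add_comm, iterate_add_apply, shift_iterate_glue, hw'z]
  calc a + b ≤ (birkhoff A k w : EReal) + (birkhoff A n w' : EReal) := add_le_add haw.le hbw'.le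
    _ ≤ (birkhoff A (k + n) u : EReal) + (C * (θ ^ N / (1 - θ)) : ℝ) := by
        rw [← EReal.coe_add, ← EReal.coe_add, EReal.coe_le_coe_iff, hsplit]
        linarith
    _ ≤ _ := by gcongr; exact le_maneApprox hu (by omega) hreach hxu

theorem manePotential_add_le (hθ0 : 0 < θ) (hθ1 : θ < 1) (hXinv : ∀ x ∈ X, shift x ∈ X)
    (hSFT : IsSFT X) (hALip : ∃ C : ℝ, ∀ x ∈ X, ∀ y ∈ X, |A x - A y| ≤ C * shiftDist θ x y)
    (x y z : ℕ → Fin m) :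
    manePotential θ X A x y + manePotential θ X A y z ≤ manePotential θ X A x z := by
  obtain ⟨C₀, hC₀⟩ := hALip
  set C := max C₀ 0
  have hA : ∀ x ∈ X, ∀ y ∈ X, |A x - A y| ≤ C * shiftDist θ x y := fun x hx y hy =>
    (hC₀ x hx y hy).trans (by gcongr; exacts [shiftDist_nonneg hθ0.le x y, le_max_left _ _])
  obtain ⟨L, hglue⟩ := hSFT.exists_glue_mem
  refine le_iInf₂ fun ε hε => EReal.le_of_forall_pos_le_add fun c hc => ?_
  have hpow : Tendsto (θ ^ ·) atTop (𝓝 0) := tendsto_pow_atTop_nhds_zero_of_lt_one hθ0.le hθ1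
  have herr : Tendsto (fun N => C * (θ ^ N / (1 - θ))) atTop (𝓝 0) := by
    simpa using (hpow.div_const (1 - θ)).const_mul C
  obtain ⟨N, hLN, hNε, hNc⟩ := ((eventually_ge_atTop L).and
    ((hpow.eventually (gt_mem_nhds hε)).and (herr.eventually (gt_mem_nhds hc)))).exists
  calc manePotential θ X A x y + manePotential θ X A y z
      ≤ maneApprox θ X A x y (θ ^ N) + maneApprox θ X A y z (θ ^ N) :=
        add_le_add (manePotential_le_maneApprox x y (pow_pos hθ0 N))
          (manePotential_le_maneApprox y z (pow_pos hθ0 N))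
    _ ≤ maneApprox θ X A x z ε + (C * (θ ^ N / (1 - θ)) : ℝ) :=
        maneApprox_add_le hθ0 hθ1 hXinv (le_max_right _ _) hA hglue hLN hNε x y z
    _ ≤ maneApprox θ X A x z ε + c := by gcongr

end ManePotential

theorem stmt16_general (d : ℕ) (θ : ℝ) (hθ0 : 0 < θ) (hθ1 : θ < 1)
    (X : Set (ℕ → Fin (d + 1)))
    (hXinv : ∀ x ∈ X, shift x ∈ X) (hSFT : IsSFT X)
    (A : (ℕ → Fin (d + 1)) → ℝ)
    (hALip : ∃ C : ℝ, ∀ x ∈ X, ∀ y ∈ X, |A x - A y| ≤ C * shiftDist θ x y)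
    (hAneg : ∀ x ∈ X, A x ≤ 0)
    (x y : ℕ → Fin (d + 1))
    (hxy : manePotential θ X A x y + manePotential θ X A y x = 0) :
    ∀ z ∈ X, manePotential θ X A x z = manePotential θ X A y z := by
  intro z _
  obtain ⟨hxy0, hyx0⟩ := eq_zero_of_nonpos_of_add_eq_zero (manePotential_nonpos hXinv hAneg x y)
    (manePotential_nonpos hXinv hAneg y x) hxy
  have hyz := manePotential_add_le hθ0 hθ1 hXinv hSFT hALip x y z
  have hxz := manePotential_add_le hθ0 hθ1 hXinv hSFT hALip y x z
  rw [hxy0, zero_add] at hyz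
  rw [hyx0, zero_add] at hxz
  exact le_antisymm hxz hyz

theorem stmt16 (d : ℕ) (θ : ℝ) (hθ0 : 0 < θ) (hθ1 : θ < 1)
    (X : Set (ℕ → Fin (d + 1))) (hXc : IsClosed X)
    (hXinv : ∀ x ∈ X, shift x ∈ X) (hSFT : IsSFT X)
    (A : (ℕ → Fin (d + 1)) → ℝ)
    (hALip : ∃ C : ℝ, ∀ x ∈ X, ∀ y ∈ X, |A x - A y| ≤ C * shiftDist θ x y)
    (hAneg : ∀ x ∈ X, A x ≤ 0)
    (hmA : MaxIntegralZero X A)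
    (x y : ℕ → Fin (d + 1)) (hx : x ∈ X) (hy : y ∈ X)
    (hxy : manePotential θ X A x y + manePotential θ X A y x = 0) :
    ∀ z ∈ X, manePotential θ X A x z = manePotential θ X A y z :=
  stmt16_general d θ hθ0 hθ1 X hXinv hSFT A hALip hAneg x y hxy
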